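/- For the RK-RR variance sequence defined by v_0 = 0 and v_{t+1} = μ(I - a_{i_t} a_{i_t}^T/||a_{i_t}||^2) v_t + μ(b_{i_t} - a_{i_t}^T x_μ) a_{i_t}/||a_{i_t}||^2 - (1-μ)x_μ, with i_t sampled with probability ||a_{i_t}||^2/||A||_F^2, the following hold: E[v_t] = 0 for all t, and E||v_t||^2 ≤ (μ^2/(1-μ^2)) ||b - A x_μ||^2 / ||A||_F^2. -/

import Mathlib

open Matrix Finset
noncomputable section

/-- Squared Euclidean norm of a vector. -/
def vnormSq {k : ℕ} (x : Fin k → ℝ) : ℝ := ∑ i, x i ^ 2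

/-- Squared Frobenius norm of a matrix. -/
def frobSq {n d : ℕ} (A : Matrix (Fin n) (Fin d) ℝ) : ℝ := ∑ i, vnormSq (A i)

/-- Row sampling probability ‖a_i‖²/‖A‖_F² used by randomized Kaczmarz. -/
def rowProb {n d : ℕ} (A : Matrix (Fin n) (Fin d) ℝ) (i : Fin n) : ℝ := vnormSq (A i) / frobSq A

/-- Spectral norm (ℓ²-operator norm) of a matrix. -/
def matSpectralNorm {n d : ℕ} (M : Matrix (Fin n) (Fin d) ℝ) : ℝ :=
  ‖LinearMap.toContinuousLinearMap (Matrix.toEuclideanLin M)‖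

/-- The four Penrose conditions characterizing the Moore–Penrose pseudoinverse. -/
def IsMoorePenrose {n d : ℕ} (A : Matrix (Fin n) (Fin d) ℝ) (Ap : Matrix (Fin d) (Fin n) ℝ) : Prop :=
  A * Ap * A = A ∧ Ap * A * Ap = Ap ∧ (A * Ap)ᵀ = A * Ap ∧ (Ap * A)ᵀ = Ap * A

/-- Demmel condition number κ_dem = ‖A⁺‖ ‖A‖_F. -/
def kdem {n d : ℕ} (A : Matrix (Fin n) (Fin d) ℝ) (Ap : Matrix (Fin d) (Fin n) ℝ) : ℝ :=
  matSpectralNorm Ap * Real.sqrt (frobSq A)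

/-- One randomized Kaczmarz update using row i. -/
def rkStep {n d : ℕ} (A : Matrix (Fin n) (Fin d) ℝ) (b : Fin n → ℝ) (i : Fin n) (x : Fin d → ℝ) :
    Fin d → ℝ := x + ((b i - A i ⬝ᵥ x) / vnormSq (A i)) • A i

/-- Randomized Kaczmarz iterates along a fixed path ω of row indices. -/
def rkSeq {n d : ℕ} (A : Matrix (Fin n) (Fin d) ℝ) (b : Fin n → ℝ) (x0 : Fin d → ℝ)
    (ω : ℕ → Fin n) : ℕ → Fin d → ℝ
  | 0 => x0
  | t + 1 => rkStep A b (ω t) (rkSeq A b x0 ω t)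

/-- Extend a finite path of indices to an infinite one. -/
def extendPath {n T : ℕ} [NeZero n] (ω : Fin T → Fin n) : ℕ → Fin n :=
  fun s => if h : s < T then ω ⟨s, h⟩ else 0

/-- Probability of a finite path of i.i.d. row indices. -/
def pathWeight {n d T : ℕ} (A : Matrix (Fin n) (Fin d) ℝ) (ω : Fin T → Fin n) : ℝ :=
  ∏ t, rowProb A (ω t)

/-- The expected one-step Kaczmarz contraction matrix I - AᵀA/‖A‖_F². -/
def kacMat {n d : ℕ} (A : Matrix (Fin n) (Fin d) ℝ) : Matrix (Fin d) (Fin d) ℝ :=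
  1 - (frobSq A)⁻¹ • (Aᵀ * A)

/-- x lies in the row space range(Aᵀ). -/
def inRowSpace {n d : ℕ} (A : Matrix (Fin n) (Fin d) ℝ) (x : Fin d → ℝ) : Prop :=
  ∃ u : Fin n → ℝ, x = Aᵀ *ᵥ u

/-- RK-RR iterates: Kaczmarz step followed by weight decay by μ. -/
def rrSeq {n d : ℕ} (A : Matrix (Fin n) (Fin d) ℝ) (b : Fin n → ℝ) (μ : ℝ) (x0 : Fin d → ℝ)
    (ω : ℕ → Fin n) : ℕ → Fin d → ℝ
  | 0 => x0
  | t + 1 => μ • rkStep A b (ω t) (rrSeq A b μ x0 ω t)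

/-- Orthogonal projection step (I - a aᵀ/‖a‖²) x for row a = A i. -/
def projStep {n d : ℕ} (A : Matrix (Fin n) (Fin d) ℝ) (i : Fin n) (x : Fin d → ℝ) : Fin d → ℝ :=
  x - ((A i ⬝ᵥ x) / vnormSq (A i)) • A i

/-- RK-RR bias sequence m_{t+1} = μ (I - a aᵀ/‖a‖²) m_t. -/
def biasSeq {n d : ℕ} (A : Matrix (Fin n) (Fin d) ℝ) (μ : ℝ) (m0 : Fin d → ℝ)
    (ω : ℕ → Fin n) : ℕ → Fin d → ℝ
  | 0 => m0
  | t + 1 => μ • projStep A (ω t) (biasSeq A μ m0 ω t)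

/-- RK-RR variance sequence v_{t+1} = μ(I - aaᵀ/‖a‖²)v_t + μ (b_i - aᵀx_μ)a/‖a‖² - (1-μ)x_μ. -/
def varSeq {n d : ℕ} (A : Matrix (Fin n) (Fin d) ℝ) (b : Fin n → ℝ) (μ : ℝ) (xmu : Fin d → ℝ)
    (ω : ℕ → Fin n) : ℕ → Fin d → ℝ
  | 0 => 0
  | t + 1 => μ • projStep A (ω t) (varSeq A b μ xmu ω t)
      + (μ * ((b (ω t) - A (ω t) ⬝ᵥ xmu) / vnormSq (A (ω t)))) • A (ω t)
      - (1 - μ) • xmu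

/-- Covariance matrix Σ = I_m + v 1_m 1_mᵀ. -/
def covM (m : ℕ) (v : ℝ) : Matrix (Fin m) (Fin m) ℝ := 1 + v • Matrix.of fun _ _ => 1

/-- Block Σ_{S,T} of the covariance matrix Σ = I + v 1 1ᵀ. -/
def subBlock {m : ℕ} (v : ℝ) (S T : Finset (Fin m)) : Matrix ↥S ↥T ℝ :=
  (covM m v).submatrix (fun i => i.1) (fun j => j.1)

/-- A deterministic adaptive algorithm that accesses at most t entries of b
(given full access to A) and outputs an estimate of the least-squares solution. -/
structure RowAccessAlg (d t : ℕ) where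
  query : (n : ℕ) → Matrix (Fin n) (Fin d) ℝ → (j : Fin t) → (Fin (j : ℕ) → ℝ) → Fin n
  output : (n : ℕ) → Matrix (Fin n) (Fin d) ℝ → (Fin t → ℝ) → Fin d → ℝ

/-- The successive answers to the algorithm's adaptive queries. -/
def RowAccessAlg.answers {d t : ℕ} (alg : RowAccessAlg d t) (n : ℕ)
    (A : Matrix (Fin n) (Fin d) ℝ) (b : Fin n → ℝ) : (j : ℕ) → j < t → ℝ
  | j, h => b (alg.query n A ⟨j, h⟩ fun i => alg.answers n A b i (i.isLt.trans h))
  termination_by j _ => j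

/-- The algorithm's output estimate on the problem (A, b). -/
def RowAccessAlg.run {d t : ℕ} (alg : RowAccessAlg d t) (n : ℕ)
    (A : Matrix (Fin n) (Fin d) ℝ) (b : Fin n → ℝ) : Fin d → ℝ :=
  alg.output n A fun j => alg.answers n A b j j.isLt

/-!
Averaging one step of the recursion over the next row index `i` (drawn with probability
`‖aᵢ‖²/‖A‖_F²`) turns the projection `I - aᵢaᵢᵀ/‖aᵢ‖²` into `kacMat A = I - AᵀA/‖A‖_F²` and the
forcing term into `μ Aᵀ(b - A x_μ)/‖A‖_F²`, which the ridge normal equation identifies with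
`(1 - μ) x_μ`. So the expected step is `v ↦ μ · kacMat A · v`, and `E[v_t] = 0` by induction.

For the second moment, `E[v] = 0` gives `E‖v‖² ≤ E‖v + c‖²` for any constant `c`. With
`c = (1 - μ) x_μ` the step becomes `μ Pᵢ v` plus a multiple of `aᵢ ⊥ Pᵢ v`, so
`E‖v_{t+1}‖² ≤ μ² E‖v_t‖² + μ² ‖b - A x_μ‖²/‖A‖_F²`, whose fixed point is the claimed bound.
-/

section Euclidean

variable {k : ℕ}

lemma vnormSq_eq_dotProduct (x : Fin k → ℝ) : vnormSq x = x ⬝ᵥ x := by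
  simp [vnormSq, dotProduct, sq]

lemma vnormSq_nonneg (x : Fin k → ℝ) : 0 ≤ vnormSq x :=
  Finset.sum_nonneg fun _ _ => sq_nonneg _

lemma vnormSq_pos {x : Fin k → ℝ} (hx : x ≠ 0) : 0 < vnormSq x := by
  refine (vnormSq_nonneg x).lt_of_ne' ?_
  rw [vnormSq_eq_dotProduct]
  exact mt dotProduct_self_eq_zero.mp hx

lemma vnormSq_smul (c : ℝ) (x : Fin k → ℝ) : vnormSq (c • x) = c ^ 2 * vnormSq x := by
  simp only [vnormSq_eq_dotProduct, smul_dotProduct, dotProduct_smul, smul_eq_mul]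
  ring

lemma vnormSq_add (x y : Fin k → ℝ) :
    vnormSq (x + y) = vnormSq x + 2 * (x ⬝ᵥ y) + vnormSq y := by
  simp only [vnormSq_eq_dotProduct, add_dotProduct, dotProduct_add, dotProduct_comm y x]
  ring

lemma vnormSq_add_of_dotProduct_eq_zero {x y : Fin k → ℝ} (h : x ⬝ᵥ y = 0) :
    vnormSq (x + y) = vnormSq x + vnormSq y := by
  rw [vnormSq_add, h, mul_zero, add_zero]

lemma sum_mul_vnormSq_le_sum_mul_vnormSq_add {ι : Type*} [Fintype ι] {w : ι → ℝ}
    (hw : ∀ ω, 0 ≤ w ω) {x : ι → Fin k → ℝ} (hx : ∑ ω, w ω • x ω = 0) (c : Fin k → ℝ) :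
    ∑ ω, w ω * vnormSq (x ω) ≤ ∑ ω, w ω * vnormSq (x ω + c) := by
  have hcross : ∑ ω, w ω * (2 * (x ω ⬝ᵥ c)) = 0 := by
    simp only [mul_left_comm (w _) 2, ← smul_dotProduct, ← smul_eq_mul (a := w _),
      ← Finset.mul_sum, ← sum_dotProduct, hx, zero_dotProduct, mul_zero]
  have hc : 0 ≤ ∑ ω, w ω * vnormSq c :=
    Finset.sum_nonneg fun ω _ => mul_nonneg (hw ω) (vnormSq_nonneg c)
  simp only [vnormSq_add, mul_add, Finset.sum_add_distrib, hcross]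
  linarith

end Euclidean

section Rows

variable {n d : ℕ} (A : Matrix (Fin n) (Fin d) ℝ)

lemma transpose_mulVec_eq_sum (u : Fin n → ℝ) : Aᵀ *ᵥ u = ∑ i, u i • A i := by
  rw [mulVec_transpose, vecMul_eq_sum]

lemma kacMat_mulVec (v : Fin d → ℝ) :
    kacMat A *ᵥ v = v - (frobSq A)⁻¹ • (Aᵀ *ᵥ (A *ᵥ v)) := by
  rw [kacMat, sub_mulVec, one_mulVec, smul_mulVec, mulVec_mulVec]

lemma projStep_dotProduct_self {i : Fin n} (hi : A i ≠ 0) (v : Fin d → ℝ) :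
    projStep A i v ⬝ᵥ A i = 0 := by
  have ha := (vnormSq_pos hi).ne'
  rw [projStep, sub_dotProduct, smul_dotProduct, smul_eq_mul, ← vnormSq_eq_dotProduct,
    div_mul_cancel₀ _ ha, dotProduct_comm, sub_self]

lemma vnormSq_projStep_le {i : Fin n} (hi : A i ≠ 0) (v : Fin d → ℝ) :
    vnormSq (projStep A i v) ≤ vnormSq v := by
  have horth : projStep A i v ⬝ᵥ ((A i ⬝ᵥ v) / vnormSq (A i)) • A i = 0 := by
    rw [dotProduct_smul, projStep_dotProduct_self A hi, smul_zero]
  have hpyth := vnormSq_add_of_dotProduct_eq_zero horth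
  rw [show projStep A i v + _ = v from sub_add_cancel _ _] at hpyth
  linarith [vnormSq_nonneg (((A i ⬝ᵥ v) / vnormSq (A i)) • A i)]

end Rows

section RowProb

variable {n d : ℕ} (A : Matrix (Fin n) (Fin d) ℝ)

lemma frobSq_pos [NeZero n] (hrows : ∀ i, A i ≠ 0) : 0 < frobSq A :=
  Finset.sum_pos (fun i _ => vnormSq_pos (hrows i)) Finset.univ_nonempty

lemma rowProb_nonneg (i : Fin n) : 0 ≤ rowProb A i :=
  div_nonneg (vnormSq_nonneg _) (Finset.sum_nonneg fun _ _ => vnormSq_nonneg _)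

lemma sum_rowProb [NeZero n] (hrows : ∀ i, A i ≠ 0) : ∑ i, rowProb A i = 1 := by
  simp only [rowProb]
  rw [← Finset.sum_div]
  exact div_self (frobSq_pos A hrows).ne'

lemma rowProb_mul_div_vnormSq {i : Fin n} (hi : A i ≠ 0) (c : ℝ) :
    rowProb A i * (c / vnormSq (A i)) = c / frobSq A := by
  rw [rowProb, div_mul_div_comm, mul_comm, mul_div_mul_right _ _ (vnormSq_pos hi).ne']

lemma sum_rowProb_smul_div_vnormSq_smul (hrows : ∀ i, A i ≠ 0) (u : Fin n → ℝ) :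
    ∑ i, rowProb A i • (u i / vnormSq (A i)) • A i = (frobSq A)⁻¹ • (Aᵀ *ᵥ u) := by
  rw [transpose_mulVec_eq_sum, Finset.smul_sum]
  refine Finset.sum_congr rfl fun i _ => ?_
  rw [smul_smul, smul_smul, rowProb_mul_div_vnormSq A (hrows i), div_eq_inv_mul]

lemma sum_rowProb_mul_sq_div_vnormSq (hrows : ∀ i, A i ≠ 0) (u : Fin n → ℝ) :
    ∑ i, rowProb A i * (u i ^ 2 / vnormSq (A i)) = vnormSq u / frobSq A := by
  rw [Finset.sum_congr rfl fun i _ => rowProb_mul_div_vnormSq A (hrows i) (u i ^ 2),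
    ← Finset.sum_div]
  rfl

lemma sum_rowProb_smul_projStep [NeZero n] (hrows : ∀ i, A i ≠ 0) (v : Fin d → ℝ) :
    ∑ i, rowProb A i • projStep A i v = kacMat A *ᵥ v := by
  simp only [projStep, smul_sub, Finset.sum_sub_distrib, ← Finset.sum_smul, sum_rowProb A hrows,
    one_smul, kacMat_mulVec, ← sum_rowProb_smul_div_vnormSq_smul A hrows (A *ᵥ v)]
  rfl

end RowProb

section Step

variable {n d : ℕ} (A : Matrix (Fin n) (Fin d) ℝ) (b : Fin n → ℝ) (μ : ℝ) (xmu : Fin d → ℝ)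

def varStep (i : Fin n) (v : Fin d → ℝ) : Fin d → ℝ :=
  μ • projStep A i v + (μ * ((b i - A i ⬝ᵥ xmu) / vnormSq (A i))) • A i - (1 - μ) • xmu

lemma varSeq_succ (ω : ℕ → Fin n) (t : ℕ) :
    varSeq A b μ xmu ω (t + 1) = varStep A b μ xmu (ω t) (varSeq A b μ xmu ω t) :=
  rfl

lemma varSeq_congr {ω₁ ω₂ : ℕ → Fin n} {t : ℕ} (h : ∀ s < t, ω₁ s = ω₂ s) :
    varSeq A b μ xmu ω₁ t = varSeq A b μ xmu ω₂ t := by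
  induction t with
  | zero => rfl
  | succ t ih =>
    rw [varSeq_succ, varSeq_succ, ih fun s hs => h s (Nat.lt_succ_of_lt hs),
      h t (Nat.lt_succ_self t)]

lemma sum_rowProb_smul_varStep [NeZero n] (hrows : ∀ i, A i ≠ 0) (hμ : μ ≠ 0)
    (hxmu : Aᵀ *ᵥ (b - A *ᵥ xmu) = ((1 - μ) / μ * frobSq A) • xmu) (v : Fin d → ℝ) :
    ∑ i, rowProb A i • varStep A b μ xmu i v = μ • (kacMat A *ᵥ v) := by
  have hF := (frobSq_pos A hrows).ne'
  have hres : ∑ i, rowProb A i • ((b i - A i ⬝ᵥ xmu) / vnormSq (A i)) • A i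
      = (frobSq A)⁻¹ • (Aᵀ *ᵥ (b - A *ᵥ xmu)) :=
    sum_rowProb_smul_div_vnormSq_smul A hrows _
  have hforce : μ • ((frobSq A)⁻¹ • (Aᵀ *ᵥ (b - A *ᵥ xmu))) = (1 - μ) • xmu := by
    rw [hxmu, smul_smul, smul_smul]
    congr 1
    field_simp
  simp only [varStep, smul_sub, smul_add, Finset.sum_sub_distrib, Finset.sum_add_distrib,
    smul_comm (rowProb A _) μ, mul_smul, ← Finset.smul_sum, ← Finset.sum_smul,
    sum_rowProb A hrows, one_smul, sum_rowProb_smul_projStep A hrows, hres, hforce,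
    add_sub_cancel_right]

lemma vnormSq_varStep_add_le {i : Fin n} (hi : A i ≠ 0) (v : Fin d → ℝ) :
    vnormSq (varStep A b μ xmu i v + (1 - μ) • xmu)
      ≤ μ ^ 2 * vnormSq v + μ ^ 2 * ((b i - A i ⬝ᵥ xmu) ^ 2 / vnormSq (A i)) := by
  have ha := (vnormSq_pos hi).ne'
  have horth : (μ • projStep A i v) ⬝ᵥ (μ * ((b i - A i ⬝ᵥ xmu) / vnormSq (A i))) • A i = 0 := by
    rw [smul_dotProduct, dotProduct_smul, projStep_dotProduct_self A hi, smul_zero, smul_zero]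
  rw [varStep, sub_add_cancel, vnormSq_add_of_dotProduct_eq_zero horth, vnormSq_smul,
    vnormSq_smul]
  have hforce : (μ * ((b i - A i ⬝ᵥ xmu) / vnormSq (A i))) ^ 2 * vnormSq (A i)
      = μ ^ 2 * ((b i - A i ⬝ᵥ xmu) ^ 2 / vnormSq (A i)) := by
    field_simp
  rw [hforce]
  gcongr
  exact vnormSq_projStep_le A hi v

lemma sum_rowProb_mul_vnormSq_varStep_add_le [NeZero n] (hrows : ∀ i, A i ≠ 0)
    (v : Fin d → ℝ) :
    ∑ i, rowProb A i * vnormSq (varStep A b μ xmu i v + (1 - μ) • xmu)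
      ≤ μ ^ 2 * vnormSq v + μ ^ 2 * (vnormSq (b - A *ᵥ xmu) / frobSq A) := by
  have hres : ∑ i, rowProb A i * ((b i - A i ⬝ᵥ xmu) ^ 2 / vnormSq (A i))
      = vnormSq (b - A *ᵥ xmu) / frobSq A :=
    sum_rowProb_mul_sq_div_vnormSq A hrows _
  calc ∑ i, rowProb A i * vnormSq (varStep A b μ xmu i v + (1 - μ) • xmu)
      ≤ ∑ i, rowProb A i *
          (μ ^ 2 * vnormSq v + μ ^ 2 * ((b i - A i ⬝ᵥ xmu) ^ 2 / vnormSq (A i))) :=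
        Finset.sum_le_sum fun i _ => mul_le_mul_of_nonneg_left
          (vnormSq_varStep_add_le A b μ xmu (hrows i) v) (rowProb_nonneg A i)
    _ = μ ^ 2 * vnormSq v + μ ^ 2 * (vnormSq (b - A *ᵥ xmu) / frobSq A) := by
        simp only [mul_add, Finset.sum_add_distrib, ← Finset.sum_mul, sum_rowProb A hrows,
          one_mul, mul_left_comm (rowProb A _) (μ ^ 2), ← Finset.mul_sum, hres]

end Step

section Paths

variable {n d : ℕ} (A : Matrix (Fin n) (Fin d) ℝ)

lemma sum_fin_succ_pi_eq_sum_snoc {T : ℕ} {α M : Type*} [Fintype α] [AddCommMonoid M]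
    (f : (Fin (T + 1) → α) → M) :
    ∑ ω, f ω = ∑ ω : Fin T → α, ∑ i, f (Fin.snoc ω i) := by
  rw [← Fintype.sum_prod_type (f := fun p : (Fin T → α) × α => f (Fin.snoc p.1 p.2))]
  exact (Fintype.sum_equiv ((Equiv.prodComm _ _).trans (Fin.snocEquiv fun _ => α))
    _ _ fun _ => rfl).symm

lemma pathWeight_snoc {T : ℕ} (ω : Fin T → Fin n) (i : Fin n) :
    pathWeight A (Fin.snoc ω i) = pathWeight A ω * rowProb A i := by
  simp [pathWeight, Fin.prod_univ_castSucc]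

lemma pathWeight_nonneg {T : ℕ} (ω : Fin T → Fin n) : 0 ≤ pathWeight A ω :=
  Finset.prod_nonneg fun t _ => rowProb_nonneg A (ω t)

lemma sum_pathWeight_smul_eq_sum_snoc {T : ℕ} {M : Type*} [AddCommMonoid M] [Module ℝ M]
    (f : (Fin (T + 1) → Fin n) → M) :
    ∑ ω, pathWeight A ω • f ω
      = ∑ ω : Fin T → Fin n, pathWeight A ω • ∑ i, rowProb A i • f (Fin.snoc ω i) := by
  simp only [sum_fin_succ_pi_eq_sum_snoc, pathWeight_snoc, mul_smul, Finset.smul_sum]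

lemma sum_pathWeight [NeZero n] (hrows : ∀ i, A i ≠ 0) (T : ℕ) :
    ∑ ω : Fin T → Fin n, pathWeight A ω = 1 := by
  induction T with
  | zero => simp [pathWeight]
  | succ T ih =>
    have h := sum_pathWeight_smul_eq_sum_snoc A fun _ : Fin (T + 1) → Fin n => (1 : ℝ)
    simp only [smul_eq_mul, mul_one, sum_rowProb A hrows] at h
    rw [h, ih]

variable [NeZero n]

lemma extendPath_snoc_of_lt {T : ℕ} (ω : Fin T → Fin n) (i : Fin n) {s : ℕ} (hs : s < T) :
    extendPath (Fin.snoc ω i) s = extendPath ω s := by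
  rw [extendPath, extendPath, dif_pos (Nat.lt_succ_of_lt hs), dif_pos hs]
  exact Fin.snoc_castSucc (α := fun _ => Fin n) i ω ⟨s, hs⟩

lemma extendPath_snoc_self {T : ℕ} (ω : Fin T → Fin n) (i : Fin n) :
    extendPath (Fin.snoc ω i) T = i := by
  rw [extendPath, dif_pos (Nat.lt_succ_self T)]
  exact Fin.snoc_last (α := fun _ => Fin n) i ω

variable (b : Fin n → ℝ) (μ : ℝ) (xmu : Fin d → ℝ)

lemma varSeq_extendPath_snoc {T : ℕ} (ω : Fin T → Fin n) (i : Fin n) :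
    varSeq A b μ xmu (extendPath (Fin.snoc ω i)) (T + 1)
      = varStep A b μ xmu i (varSeq A b μ xmu (extendPath ω) T) := by
  rw [varSeq_succ, extendPath_snoc_self,
    varSeq_congr A b μ xmu fun s hs => extendPath_snoc_of_lt ω i hs]

end Paths

section Moments

variable {n d : ℕ} [NeZero n] (A : Matrix (Fin n) (Fin d) ℝ) (b : Fin n → ℝ) (μ : ℝ)
  (xmu : Fin d → ℝ)

lemma sum_pathWeight_smul_varSeq_eq_zero (hrows : ∀ i, A i ≠ 0) (hμ : μ ≠ 0)
    (hxmu : Aᵀ *ᵥ (b - A *ᵥ xmu) = ((1 - μ) / μ * frobSq A) • xmu) (T : ℕ) :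
    ∑ ω : Fin T → Fin n, pathWeight A ω • varSeq A b μ xmu (extendPath ω) T = 0 := by
  induction T with
  | zero => simp [varSeq]
  | succ T ih =>
    simp only [sum_pathWeight_smul_eq_sum_snoc, varSeq_extendPath_snoc,
      sum_rowProb_smul_varStep A b μ xmu hrows hμ hxmu, smul_comm (pathWeight A _) μ,
      ← mulVec_smul, ← Finset.smul_sum, ← mulVec_sum, ih, mulVec_zero, smul_zero]

lemma sum_pathWeight_mul_vnormSq_varSeq_succ_le (hrows : ∀ i, A i ≠ 0) (hμ : μ ≠ 0)
    (hxmu : Aᵀ *ᵥ (b - A *ᵥ xmu) = ((1 - μ) / μ * frobSq A) • xmu) (T : ℕ) :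
    ∑ ω : Fin (T + 1) → Fin n, pathWeight A ω * vnormSq (varSeq A b μ xmu (extendPath ω) (T + 1))
      ≤ μ ^ 2 * ∑ ω : Fin T → Fin n, pathWeight A ω * vnormSq (varSeq A b μ xmu (extendPath ω) T)
        + μ ^ 2 * (vnormSq (b - A *ᵥ xmu) / frobSq A) := by
  calc ∑ ω : Fin (T + 1) → Fin n,
        pathWeight A ω * vnormSq (varSeq A b μ xmu (extendPath ω) (T + 1))
      ≤ ∑ ω : Fin (T + 1) → Fin n,
          pathWeight A ω * vnormSq (varSeq A b μ xmu (extendPath ω) (T + 1) + (1 - μ) • xmu) :=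
        sum_mul_vnormSq_le_sum_mul_vnormSq_add (pathWeight_nonneg A)
          (sum_pathWeight_smul_varSeq_eq_zero A b μ xmu hrows hμ hxmu (T + 1)) _
    _ = ∑ ω : Fin T → Fin n, pathWeight A ω * ∑ i, rowProb A i *
          vnormSq (varStep A b μ xmu i (varSeq A b μ xmu (extendPath ω) T) + (1 - μ) • xmu) := by
        simpa only [smul_eq_mul, varSeq_extendPath_snoc] using
          sum_pathWeight_smul_eq_sum_snoc (T := T) A fun ω =>
            vnormSq (varSeq A b μ xmu (extendPath ω) (T + 1) + (1 - μ) • xmu)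
    _ ≤ ∑ ω : Fin T → Fin n, pathWeight A ω * (μ ^ 2 * vnormSq (varSeq A b μ xmu (extendPath ω) T)
          + μ ^ 2 * (vnormSq (b - A *ᵥ xmu) / frobSq A)) :=
        Finset.sum_le_sum fun ω _ => mul_le_mul_of_nonneg_left
          (sum_rowProb_mul_vnormSq_varStep_add_le A b μ xmu hrows _) (pathWeight_nonneg A ω)
    _ = μ ^ 2 * ∑ ω : Fin T → Fin n, pathWeight A ω * vnormSq (varSeq A b μ xmu (extendPath ω) T)
          + μ ^ 2 * (vnormSq (b - A *ᵥ xmu) / frobSq A) := by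
        simp only [mul_add, Finset.sum_add_distrib, mul_left_comm (pathWeight A _) (μ ^ 2),
          ← Finset.mul_sum, ← Finset.sum_mul, sum_pathWeight A hrows, one_mul]

lemma sum_pathWeight_mul_vnormSq_varSeq_le (hrows : ∀ i, A i ≠ 0) (hμ0 : 0 < μ) (hμ1 : μ < 1)
    (hxmu : Aᵀ *ᵥ (b - A *ᵥ xmu) = ((1 - μ) / μ * frobSq A) • xmu) (T : ℕ) :
    ∑ ω : Fin T → Fin n, pathWeight A ω * vnormSq (varSeq A b μ xmu (extendPath ω) T)
      ≤ μ ^ 2 / (1 - μ ^ 2) * (vnormSq (b - A *ᵥ xmu) / frobSq A) := by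
  have hC : 0 ≤ vnormSq (b - A *ᵥ xmu) / frobSq A :=
    div_nonneg (vnormSq_nonneg _) (frobSq_pos A hrows).le
  have hμ2 : 0 < 1 - μ ^ 2 := by nlinarith
  induction T with
  | zero =>
    rw [Finset.sum_eq_zero fun ω _ => by simp [varSeq, vnormSq]]
    exact mul_nonneg (div_nonneg (sq_nonneg μ) hμ2.le) hC
  | succ T ih =>
    have hfix : μ ^ 2 * (μ ^ 2 / (1 - μ ^ 2)) + μ ^ 2 = μ ^ 2 / (1 - μ ^ 2) := by
      field_simp
      ring
    calc _ ≤ _ := sum_pathWeight_mul_vnormSq_varSeq_succ_le A b μ xmu hrows hμ0.ne' hxmu T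
      _ ≤ μ ^ 2 * (μ ^ 2 / (1 - μ ^ 2) * (vnormSq (b - A *ᵥ xmu) / frobSq A))
          + μ ^ 2 * (vnormSq (b - A *ᵥ xmu) / frobSq A) := by gcongr
      _ = μ ^ 2 / (1 - μ ^ 2) * (vnormSq (b - A *ᵥ xmu) / frobSq A) := by
        linear_combination (vnormSq (b - A *ᵥ xmu) / frobSq A) * hfix

end Moments

/-- the RK-RR variance sequence v_0 = 0,
v_{t+1} = μ(I - aaᵀ/‖a‖²)v_t + μ(b_i - aᵀx_μ)a/‖a‖² - (1-μ)x_μ satisfies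
E[v_t] = 0 and E‖v_t‖² ≤ (μ²/(1-μ²)) ‖b - Ax_μ‖²/‖A‖_F². -/
theorem rkrr_variance_bound {n d : ℕ} [NeZero n]
    (A : Matrix (Fin n) (Fin d) ℝ) (b : Fin n → ℝ) (hrows : ∀ i, A i ≠ 0)
    (μ : ℝ) (hμ0 : 0 < μ) (hμ1 : μ < 1)
    (lam : ℝ) (hlam : lam = (1 - μ) / μ * frobSq A)
    (xmu : Fin d → ℝ) (hxmu : Aᵀ *ᵥ (b - A *ᵥ xmu) = lam • xmu) :
    (∀ T : ℕ, ∑ ω : Fin T → Fin n, pathWeight A ω • varSeq A b μ xmu (extendPath ω) T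
        = (0 : Fin d → ℝ))
    ∧ (∀ T : ℕ, ∑ ω : Fin T → Fin n,
          pathWeight A ω * vnormSq (varSeq A b μ xmu (extendPath ω) T)
        ≤ μ ^ 2 / (1 - μ ^ 2) * (vnormSq (b - A *ᵥ xmu) / frobSq A)) := by
  subst hlam
  exact ⟨sum_pathWeight_smul_varSeq_eq_zero A b μ xmu hrows hμ0.ne' hxmu,
    sum_pathWeight_mul_vnormSq_varSeq_le A b μ xmu hrows hμ0 hμ1 hxmu⟩
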